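/- arXiv:1105.5290 — 3 statements merged into one kernel-verified Lean document; each statement's English description precedes it below -/
import Mathlib

section
/- A morphism φ : (X,x0) → (Y,y0) of pointed sets is strong (i.e., the canonical map from coim(φ) to im(φ) is an isomorphism) if and only if φ is injective on the complement of φ⁻¹({y0}). -/
/-- The coimage of a pointed map `φ : (X,x0) → (Y,y0)`: `X` with `φ⁻¹({y0})`
collapsed to the basepoint. -/
def coim {X Y : Type u} (y0 : Y) (φ : X → Y) : Type u :=
  Quot (fun a b : X => a = b ∨ (φ a = y0 ∧ φ b = y0))

/-- The canonical map from the coimage of `φ` to its image `φ(X)`. -/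
def coimToIm {X Y : Type u} (y0 : Y) (φ : X → Y) : coim y0 φ → Set.range φ :=
  Quot.lift (fun x => ⟨φ x, x, rfl⟩) (by
    rintro a b (rfl | ⟨h1, h2⟩)
    · rfl
    · exact Subtype.ext (h1.trans h2.symm))

lemma coim_exact {X Y : Type u} (y0 : Y) (φ : X → Y) (a b : X)
    (h : (Quot.mk _ a : coim y0 φ) = Quot.mk _ b) :
    a = b ∨ (φ a = y0 ∧ φ b = y0) := by
  have key : ∀ c : X, (Quot.mk _ a : coim y0 φ) = Quot.mk _ c →
      (a = c ∨ (φ a = y0 ∧ φ c = y0)) := by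
    intro c hc
    have := congrArg (Quot.lift (fun x => a = x ∨ (φ a = y0 ∧ φ x = y0)) (by
      rintro p q (rfl | ⟨h1, h2⟩)
      · rfl
      · apply propext
        constructor
        · rintro (rfl | ⟨ha, _⟩)
          · exact Or.inr ⟨h1, h2⟩
          · exact Or.inr ⟨ha, h2⟩
        · rintro (rfl | ⟨ha, _⟩)
          · exact Or.inr ⟨h2, h1⟩
          · exact Or.inr ⟨ha, h1⟩)) hc
    exact Eq.mp this (Or.inl rfl)
  exact key b h

/-- A morphism `φ : (X,x0) → (Y,y0)` of pointed sets is strong (the canonical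
map `coim(φ) → im(φ)` is an isomorphism, i.e. bijective) iff `φ` is injective on the
complement of `φ⁻¹({y0})`. -/
theorem stmt2 {X Y : Type u} (x0 : X) (y0 : Y) (φ : X → Y) (hφ : φ x0 = y0) :
    Function.Bijective (coimToIm y0 φ) ↔ Set.InjOn φ {x | φ x ≠ y0} := by
  constructor
  · rintro ⟨hinj, -⟩ a ha b hb hab
    have : (Quot.mk _ a : coim y0 φ) = Quot.mk _ b := by
      apply hinj
      exact Subtype.ext hab
    rcases coim_exact y0 φ a b this with rfl | ⟨h1, _⟩
    · rfl
    · exact absurd h1 ha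
  · intro hinj
    constructor
    · intro p q
      induction p using Quot.ind with | _ a =>
      induction q using Quot.ind with | _ b =>
      intro h
      have hab : φ a = φ b := congrArg Subtype.val h
      apply Quot.sound
      by_cases ha : φ a = y0
      · exact Or.inr ⟨ha, hab ▸ ha⟩
      · exact Or.inl (hinj ha (fun hb => ha (hab.trans hb)) hab)
    · rintro ⟨y, x, rfl⟩
      exact ⟨Quot.mk _ x, rfl⟩
end

section
/- In a category with enough projectives, if a commutative square is cartesian and the bottom morphism f : B → Y is an epimorphism, then the top morphism f' : A → X is an epimorphism. -/
open CategoryTheory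

/-- In a category with enough projectives, if a commutative square is cartesian
and the bottom morphism `f : B ⟶ Y` is an epimorphism, then the top morphism `f' : A ⟶ X`
is an epimorphism. -/
theorem stmt6 {C : Type u} [Category.{v} C] [EnoughProjectives C] {A B X Y : C}
    (f' : A ⟶ X) (u : A ⟶ B) (v : X ⟶ Y) (f : B ⟶ Y)
    (h : IsPullback f' u v f) [Epi f] : Epi f' := by
  have comm : Projective.π X ≫ v = Projective.factorThru (Projective.π X ≫ v) f ≫ f := by
    simp
  obtain ⟨w, hw⟩ : ∃ w : Projective.over X ⟶ A, w ≫ f' = Projective.π X :=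
    ⟨h.lift (Projective.π X) (Projective.factorThru (Projective.π X ≫ v) f) comm,
      h.lift_fst _ _ _⟩
  have : Epi (w ≫ f') := by rw [hw]; infer_instance
  exact epi_of_epi w f'
end

section
/- Every injective object in the category of sheaves of pointed O_X-modules on a monoided space X is flabby. -/
open CategoryTheory TopologicalSpace Opposite

universe u

variable (X : TopCat.{u}) (O : TopCat.Presheaf CommMonCat.{u} X)

/-- A sheaf of pointed `O_X`-modules on a monoided space `(X, O_X)`: a sheaf of pointed
sets together with an `O_X`-action which is compatible with restriction, where the
basepoints are stationary and preserved by restriction. -/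
structure PtdOSheaf : Type (u + 1) where
  /-- the underlying presheaf of sets -/
  presheaf : TopCat.Presheaf (Type u) X
  isSheaf : presheaf.IsSheaf
  /-- the basepoint of each set of sections -/
  pt : ∀ U : (Opens X)ᵒᵖ, presheaf.obj U
  pt_res : ∀ {U V : (Opens X)ᵒᵖ} (f : U ⟶ V), presheaf.map f (pt U) = pt V
  /-- the action of `O_X(U)` on `F(U)` -/
  smul : ∀ U : (Opens X)ᵒᵖ, (O.obj U) → presheaf.obj U → presheaf.obj U
  one_smul : ∀ (U) (s), smul U 1 s = s
  mul_smul : ∀ (U) (a b : O.obj U) (s), smul U (a * b) s = smul U a (smul U b s)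
  smul_pt : ∀ (U) (a : O.obj U), smul U a (pt U) = pt U
  smul_res : ∀ {U V : (Opens X)ᵒᵖ} (f : U ⟶ V) (a : O.obj U) (s : presheaf.obj U),
    presheaf.map f (smul U a s) = smul V (O.map f a) (presheaf.map f s)

variable {X O}

/-- Morphisms of sheaves of pointed `O_X`-modules: natural, equivariant,
basepoint-preserving. -/
@[ext]
structure PtdOSheafHom (F G : PtdOSheaf X O) where
  app : ∀ U : (Opens X)ᵒᵖ, F.presheaf.obj U → G.presheaf.obj U
  naturality : ∀ {U V : (Opens X)ᵒᵖ} (f : U ⟶ V) (s : F.presheaf.obj U),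
    G.presheaf.map f (app U s) = app V (F.presheaf.map f s)
  map_pt : ∀ U, app U (F.pt U) = G.pt U
  map_smul : ∀ (U) (a : O.obj U) (s : F.presheaf.obj U),
    app U (F.smul U a s) = G.smul U a (app U s)

/-- The category `Mod₀(X)` of sheaves of pointed `O_X`-modules. -/
instance : Category (PtdOSheaf X O) where
  Hom := PtdOSheafHom
  id F := ⟨fun _ => id, fun _ _ => rfl, fun _ => rfl, fun _ _ _ => rfl⟩
  comp f g := ⟨fun U => g.app U ∘ f.app U,
    fun h s => by simp [Function.comp, f.naturality, g.naturality],
    fun U => by simp [Function.comp, f.map_pt, g.map_pt],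
    fun U a s => by simp [Function.comp, f.map_smul, g.map_smul]⟩
  id_comp f := PtdOSheafHom.ext rfl
  comp_id f := PtdOSheafHom.ext rfl
  assoc f g h := PtdOSheafHom.ext rfl

/-!
An injective `I` is a retract of any sheaf it embeds into, and a retract of a flabby sheaf is
flabby. The embedding used is the Godement sheaf `W ↦ ∏_{x ∈ W} I_x` of discontinuous sections
of the stalks: it is flabby because a family of germs over `V ⊆ U` extends by basepoint germs,
`O_X(W)` acts on it through the action on representatives, and `I` maps into it injectively
because sections of a sheaf are determined by their germs.
-/

namespace TopCat.Presheaf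

lemma map_map_apply {C : Type*} [Category C] {FC : C → C → Type*}
    {CC : C → Type*} [∀ A B, FunLike (FC A B) (CC A) (CC B)] [ConcreteCategory C FC]
    (P : TopCat.Presheaf C X) {U V W : (Opens X)ᵒᵖ} (f : U ⟶ V) (g : V ⟶ W) (h : U ⟶ W)
    (s : ToType (P.obj U)) :
    P.map g (P.map f s) = P.map h s := by
  rw [← ConcreteCategory.comp_apply, ← P.map_comp]
  rfl

lemma isFlasque_iff_surjective (P : TopCat.Presheaf (Type u) X) :
    IsFlasque P ↔ ∀ (U V : Opens X) (h : V ≤ U), Function.Surjective (P.map (homOfLE h).op) :=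
  ⟨fun hP _ _ _ => (CategoryTheory.epi_iff_surjective _).mp (hP.epi _),
    fun hP => ⟨fun i => (CategoryTheory.epi_iff_surjective _).mpr (hP _ _ i.unop.le)⟩⟩

end TopCat.Presheaf

namespace PtdOSheaf

open TopCat.Presheaf

variable (F : PtdOSheaf X O)

lemma germ_smul_restrict {x : X} {U W V V' : Opens X} (hVW : V ≤ W) (hVU : V ≤ U)
    (hV' : V' ≤ V) (hx : x ∈ V') (a : O.obj (op W)) (s : F.presheaf.obj (op U)) :
    F.presheaf.germ V' x hx (F.smul (op V') (O.map (homOfLE (hV'.trans hVW)).op a)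
        (F.presheaf.map (homOfLE (hV'.trans hVU)).op s)) =
      F.presheaf.germ V x (hV' hx) (F.smul (op V) (O.map (homOfLE hVW).op a)
        (F.presheaf.map (homOfLE hVU).op s)) := by
  rw [← germ_res_apply F.presheaf (homOfLE hV') x hx, F.smul_res, map_map_apply,
    map_map_apply]

lemma germ_smul_eq_of_germ_eq {x : X} {W U U' V V' : Opens X} (hVW : V ≤ W) (hVU : V ≤ U)
    (hV'W : V' ≤ W) (hV'U' : V' ≤ U') (hx : x ∈ V) (hx' : x ∈ V') (a : O.obj (op W))
    (s : F.presheaf.obj (op U)) (s' : F.presheaf.obj (op U'))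
    (h : F.presheaf.germ U x (hVU hx) s = F.presheaf.germ U' x (hV'U' hx') s') :
    F.presheaf.germ V x hx (F.smul (op V) (O.map (homOfLE hVW).op a)
        (F.presheaf.map (homOfLE hVU).op s)) =
      F.presheaf.germ V' x hx' (F.smul (op V') (O.map (homOfLE hV'W).op a)
        (F.presheaf.map (homOfLE hV'U').op s')) := by
  obtain ⟨T, hxT, hTU, hTU', hss'⟩ := F.presheaf.germ_eq x _ _ _ _ h
  set T' := T ⊓ V ⊓ V'
  have hxT' : x ∈ T' := ⟨⟨hxT, hx⟩, hx'⟩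
  have hT'V : T' ≤ V := inf_le_left.trans inf_le_right
  have hT'T : T' ≤ T := inf_le_left.trans inf_le_left
  have hs : F.presheaf.map (homOfLE (hT'V.trans hVU)).op s
      = F.presheaf.map (homOfLE (inf_le_right.trans hV'U')).op s' := by
    rw [← map_map_apply _ hTU.op (homOfLE hT'T).op, hss', map_map_apply]
  rw [← F.germ_smul_restrict hVW hVU hT'V hxT',
    ← F.germ_smul_restrict hV'W hV'U' inf_le_right hxT', hs]

/-- `a` acts on a germ through a chosen representing section; by `germ_smul_eq_of_germ_eq` the
result does not depend on the choice (`stalkSMul_germ`). -/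
noncomputable def stalkSMul {x : X} {W : Opens X} (hx : x ∈ W) (a : O.obj (op W))
    (g : F.presheaf.stalk x) : F.presheaf.stalk x :=
  have hg := F.presheaf.exists_germ_eq g
  F.presheaf.germ (W ⊓ hg.choose) x ⟨hx, hg.choose_spec.choose⟩
    (F.smul (op (W ⊓ hg.choose)) (O.map (homOfLE inf_le_left).op a)
      (F.presheaf.map (homOfLE inf_le_right).op hg.choose_spec.choose_spec.choose))

lemma stalkSMul_germ {x : X} {U W V : Opens X} (hVW : V ≤ W) (hVU : V ≤ U) (hx : x ∈ V)
    (a : O.obj (op W)) (s : F.presheaf.obj (op U)) :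
    F.stalkSMul (hVW hx) a (F.presheaf.germ U x (hVU hx) s) =
      F.presheaf.germ V x hx (F.smul (op V) (O.map (homOfLE hVW).op a)
        (F.presheaf.map (homOfLE hVU).op s)) :=
  have hg := F.presheaf.exists_germ_eq (F.presheaf.germ U x (hVU hx) s)
  F.germ_smul_eq_of_germ_eq _ _ _ _ _ _ _ _ _ hg.choose_spec.choose_spec.choose_spec

lemma stalkSMul_restrict {x : X} {W W' : Opens X} (h : W' ≤ W) (hx : x ∈ W')
    (a : O.obj (op W)) (g : F.presheaf.stalk x) :
    F.stalkSMul (h hx) a g = F.stalkSMul hx (O.map (homOfLE h).op a) g := by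
  obtain ⟨U, hxU, s, rfl⟩ := F.presheaf.exists_germ_eq g
  have hxV : x ∈ W' ⊓ U := ⟨hx, hxU⟩
  rw [F.stalkSMul_germ (inf_le_left.trans h) inf_le_right hxV,
    F.stalkSMul_germ inf_le_left inf_le_right hxV, map_map_apply]

lemma stalkSMul_one {x : X} {W : Opens X} (hx : x ∈ W) (g : F.presheaf.stalk x) :
    F.stalkSMul hx 1 g = g := by
  obtain ⟨U, hxU, s, rfl⟩ := F.presheaf.exists_germ_eq g
  have hxV : x ∈ W ⊓ U := ⟨hx, hxU⟩
  rw [F.stalkSMul_germ inf_le_left inf_le_right hxV, map_one, F.one_smul, germ_res_apply]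

lemma stalkSMul_mul {x : X} {W : Opens X} (hx : x ∈ W) (a b : O.obj (op W))
    (g : F.presheaf.stalk x) :
    F.stalkSMul hx (a * b) g = F.stalkSMul hx a (F.stalkSMul hx b g) := by
  obtain ⟨U, hxU, s, rfl⟩ := F.presheaf.exists_germ_eq g
  have hxV : x ∈ W ⊓ U := ⟨hx, hxU⟩
  rw [F.stalkSMul_germ inf_le_left inf_le_right hxV,
    F.stalkSMul_germ inf_le_left inf_le_right hxV, F.stalkSMul_germ inf_le_left le_rfl hxV,
    map_mul, F.mul_smul]
  simp

noncomputable def godement : PtdOSheaf X O where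
  presheaf := TopCat.presheafToTypes X fun x => F.presheaf.stalk x
  isSheaf := toTypes_isSheaf X _
  pt U x := F.presheaf.germ U.unop x x.2 (F.pt U)
  pt_res f := by
    funext x
    rw [← F.pt_res f, germ_res_apply']
    rfl
  smul U a g x := F.stalkSMul x.2 a (g x)
  one_smul U g := funext fun x => F.stalkSMul_one x.2 (g x)
  mul_smul U a b g := funext fun x => F.stalkSMul_mul x.2 a b (g x)
  smul_pt U a := funext fun x => by
    rw [F.stalkSMul_germ le_rfl le_rfl x.2, F.pt_res, F.smul_pt]
  smul_res f a g := funext fun x => F.stalkSMul_restrict f.unop.le x.2 a _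

noncomputable def toGodement : F ⟶ F.godement where
  app U s x := F.presheaf.germ U.unop x x.2 s
  naturality f s := funext fun x => (germ_res_apply' F.presheaf f x x.2 s).symm
  map_pt U := rfl
  map_smul U a s := funext fun x => by
    show _ = F.stalkSMul x.2 a _
    simpa using (F.stalkSMul_germ le_rfl le_rfl x.2 a s).symm

lemma toGodement_app_injective (U : (Opens X)ᵒᵖ) : Function.Injective (F.toGodement.app U) :=
  fun s t h => section_ext ⟨F.presheaf, F.isSheaf⟩ U.unop s t fun x hx => congrFun h ⟨x, hx⟩

lemma mono_of_app_injective {F G : PtdOSheaf X O} (f : F ⟶ G)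
    (hf : ∀ U, Function.Injective (f.app U)) : Mono f :=
  ⟨fun _ _ h => PtdOSheafHom.ext <| funext fun U => funext fun s =>
    hf U (congrFun (congrFun (congrArg PtdOSheafHom.app h) U) s)⟩

instance : Mono F.toGodement := mono_of_app_injective _ F.toGodement_app_injective

lemma isFlasque_of_retraction {F G : PtdOSheaf X O} (i : F ⟶ G) (r : G ⟶ F)
    (hir : i ≫ r = 𝟙 F) (hG : IsFlasque G.presheaf) : IsFlasque F.presheaf := by
  rw [isFlasque_iff_surjective] at hG ⊢
  intro U V h s
  obtain ⟨t, ht⟩ := hG U V h (i.app _ s)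
  refine ⟨r.app _ t, ?_⟩
  rw [r.naturality, ht]
  exact congrFun (congrFun (congrArg PtdOSheafHom.app hir) _) s

lemma isFlasque_godement : IsFlasque F.godement.presheaf := by
  classical
  rw [isFlasque_iff_surjective]
  intro U V h s
  refine ⟨fun x => if hx : x.1 ∈ V then s ⟨x, hx⟩ else F.godement.pt _ x, ?_⟩
  funext x
  exact dif_pos x.2

end PtdOSheaf

/-- Every injective object in the category of sheaves of pointed
`O_X`-modules on a monoided space `X` is flabby. -/
theorem stmt18 (I : PtdOSheaf X O) (hI : Injective I) :
    ∀ (U V : Opens X) (h : V ≤ U),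
      Function.Surjective (I.presheaf.map (homOfLE h).op) := by
  obtain ⟨r, hr⟩ := hI.factors (𝟙 I) I.toGodement
  rw [← TopCat.Presheaf.isFlasque_iff_surjective]
  exact PtdOSheaf.isFlasque_of_retraction _ r hr I.isFlasque_godement
end
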